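/- Let A be a compact metric space with points (a_i^k)_{1≤i≤k} and weights (Λ_i : [0,1]² → [0,1])_{1≤i≤k} measurable with Σ_{i=1}^k Λ_i(x,y) = 1 for all (x,y), each Λ_i piecewise constant on the grid {[(q−1)/m, q/m)}² for some m dividing n. Then there exists a measurable map α : [0,1]² → A taking values in {a_1^k, …, a_k^k} such that for every continuous φ : A × [0,1]² → ℝ with uniform modulus of continuity w_φ, and every t ∈ [0,1], |∫_0^1 φ(α(s,t), s, t) ds − Σ_{i=1}^k ∫_0^1 φ(a_i^k, s, t) Λ_i(s,t) ds| ≤ w_φ(1/n). -/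

import Mathlib

/-!
Cut `[0, 1]` into the cells `[j/n, (j+1)/n)`; since `m ∣ n`, every `Λ i · t` is constant on each
cell. Cut a cell further into consecutive intervals of lengths `Λ i (j/n) t / n` and let `α` pick
`a i` on the `i`-th one. On the cell `φ (a i, ·, t)` oscillates by at most `w_φ(1/n)`, so it stays
within `w_φ(1/n)` of its mean; hence its integral over the `i`-th interval is within
`w_φ(1/n) Λ i (j/n) t / n` of `Λ i (j/n) t` times its integral over the cell. Summing over `i` and
over the `n` cells gives the bound `w_φ(1/n)`.
-/

open MeasureTheory Set

variable {k : ℕ}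

def partialWeight (w : Fin k → ℝ) (i : ℕ) : ℝ :=
  ∑ j with j.val < i, w j

lemma partialWeight_zero (w : Fin k → ℝ) : partialWeight w 0 = 0 := by
  simp [partialWeight]

lemma partialWeight_of_le (w : Fin k → ℝ) {i : ℕ} (hi : k ≤ i) :
    partialWeight w i = ∑ j, w j := by
  rw [partialWeight, Finset.filter_true_of_mem fun j _ => j.isLt.trans_le hi]

lemma partialWeight_succ (w : Fin k → ℝ) (i : Fin k) :
    partialWeight w (i + 1) = partialWeight w i + w i := by
  simp only [partialWeight, Finset.sum_filter]
  rw [← Fintype.sum_ite_eq' i w, ← Finset.sum_add_distrib]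
  refine Finset.sum_congr rfl fun j _ => ?_
  by_cases h : j = i
  · simp [h]
  · simp [h, le_iff_lt_or_eq, Fin.val_ne_of_ne h]

lemma partialWeight_mono {w : Fin k → ℝ} (hw : ∀ i, 0 ≤ w i) : Monotone (partialWeight w) :=
  fun _ _ h => Finset.sum_le_sum_of_subset_of_nonneg
    (fun j hj => by simp only [Finset.mem_filter, Finset.mem_univ, true_and] at hj ⊢; omega)
    fun j _ _ => hw j

/-- Cutting `[0, 1)` into consecutive intervals of lengths `w 0, …, w (k - 1)`, the index of the
interval that contains `θ`; these intervals are the paper's rectangles `U_i` in one cell. -/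
noncomputable def chatterIndex [NeZero k] (w : Fin k → ℝ) (θ : ℝ) : Fin k :=
  ({i | partialWeight w i ≤ θ} : Finset (Fin k)).sup id

section chatterIndex

variable [NeZero k] {w : Fin k → ℝ}

lemma chatterIndex_eq_iff (hw0 : ∀ i, 0 ≤ w i) (hw1 : ∑ i, w i = 1) {θ : ℝ}
    (hθ : θ ∈ Ico 0 1) (i : Fin k) :
    chatterIndex w θ = i ↔ θ ∈ Ico (partialWeight w i) (partialWeight w (i + 1)) := by
  set F : Finset (Fin k) := {i | partialWeight w i ≤ θ}
  have hF : ∀ i, i ∈ F ↔ partialWeight w i ≤ θ := by simp [F]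
  obtain ⟨c, hcF, hc⟩ := F.exists_mem_eq_sup ⟨0, (hF 0).2 (by simp [partialWeight_zero, hθ.1])⟩ id
  have hlt : θ < partialWeight w (c + 1) := by
    by_contra! hle
    by_cases hck : (c : ℕ) + 1 < k
    · have := (F.le_sup (f := id) ((hF ⟨c + 1, hck⟩).2 hle)).trans_eq hc
      exact absurd (Fin.le_def.1 this) (by simp)
    · rw [partialWeight_of_le w (not_lt.1 hck), hw1] at hle
      exact hθ.2.not_ge hle
  rw [chatterIndex, hc, id]
  constructor
  · rintro rfl
    exact ⟨(hF c).1 hcF, hlt⟩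
  · rintro ⟨hi, hθi⟩
    refine le_antisymm ?_ ((F.le_sup (f := id) ((hF i).2 hi)).trans_eq hc)
    by_contra! hic
    exact ((partialWeight_mono hw0 (Nat.succ_le_of_lt hic)).trans ((hF c).1 hcF)).not_gt hθi

lemma volume_setOf_chatterIndex_eq (hw0 : ∀ i, 0 ≤ w i) (hw1 : ∑ i, w i = 1) (i : Fin k) :
    volume {θ ∈ Ico (0 : ℝ) 1 | chatterIndex w θ = i} = ENNReal.ofReal (w i) := by
  have hfiber : {θ ∈ Ico (0 : ℝ) 1 | chatterIndex w θ = i} =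
      Ico (partialWeight w i) (partialWeight w (i + 1)) := by
    ext θ
    refine ⟨fun h => (chatterIndex_eq_iff hw0 hw1 h.1 i).1 h.2, fun h => ?_⟩
    have h0 : 0 ≤ partialWeight w i := partialWeight_zero w ▸ partialWeight_mono hw0 (Nat.zero_le _)
    have h1 : partialWeight w (i + 1) ≤ 1 :=
      hw1 ▸ partialWeight_of_le w le_rfl ▸ partialWeight_mono hw0 i.isLt
    have hθ : θ ∈ Ico (0 : ℝ) 1 := ⟨h0.trans h.1, h.2.trans_le h1⟩
    exact ⟨hθ, (chatterIndex_eq_iff hw0 hw1 hθ i).2 h⟩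
  rw [hfiber, Real.volume_Ico, partialWeight_succ, add_sub_cancel_left]

end chatterIndex

lemma measurable_chatterIndex [NeZero k] {X : Type*} [MeasurableSpace X] {ω : X → Fin k → ℝ}
    {θ : X → ℝ} (hω : ∀ i, Measurable fun x => ω x i) (hθ : Measurable θ)
    (hω0 : ∀ x i, 0 ≤ ω x i) (hω1 : ∀ x, ∑ i, ω x i = 1) (hθ01 : ∀ x, θ x ∈ Ico 0 1) :
    Measurable fun x => chatterIndex (ω x) (θ x) := by
  have hS : ∀ i : ℕ, Measurable fun x => partialWeight (ω x) i := fun i =>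
    Finset.measurable_sum _ fun j _ => hω j
  refine measurable_to_countable' fun i => ?_
  have hpre : (fun x => chatterIndex (ω x) (θ x)) ⁻¹' {i} =
      {x | partialWeight (ω x) i ≤ θ x} ∩ {x | θ x < partialWeight (ω x) (i + 1)} := by
    ext x
    exact chatterIndex_eq_iff (hω0 x) (hω1 x) (hθ01 x) i
  rw [hpre]
  exact (measurableSet_le (hS _) hθ).inter (measurableSet_lt hθ (hS _))

section select

variable {X ι : Type*} [Fintype ι] {f : ι → X → ℝ} {σ : X → ι}

lemma select_eq_sum_indicator (x : X) :
    f (σ x) x = ∑ i, (σ ⁻¹' {i}).indicator (f i) x := by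
  rw [Fintype.sum_eq_single (σ x) fun i hi =>
      indicator_of_notMem (s := σ ⁻¹' {i}) (Ne.symm hi) (f i),
    indicator_of_mem (s := σ ⁻¹' {σ x}) rfl]

variable [MeasurableSpace X] {μ : Measure X}

lemma integrable_select (hσ : ∀ i, MeasurableSet (σ ⁻¹' {i})) (hf : ∀ i, Integrable (f i) μ) :
    Integrable (fun x => f (σ x) x) μ := by
  simp_rw [select_eq_sum_indicator]
  exact integrable_finsetSum _ fun i _ => (hf i).indicator (hσ i)

theorem abs_integral_select_sub_sum_le [IsFiniteMeasure μ] {w : ι → ℝ} {W : ℝ}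
    (hσ : ∀ i, MeasurableSet (σ ⁻¹' {i})) (hf : ∀ i, Integrable (f i) μ)
    (hfiber : ∀ i, μ.real (σ ⁻¹' {i}) = w i * μ.real univ)
    (hosc : ∀ i, ∀ᵐ x ∂μ, ∀ᵐ y ∂μ, |f i x - f i y| ≤ W) :
    |∫ x, f (σ x) x ∂μ - ∑ i, w i * ∫ x, f i x ∂μ| ≤ W * μ.real univ := by
  rcases eq_zero_or_neZero μ with rfl | hμ
  · simp
  have hdev : ∀ i, ∀ᵐ x ∂μ, |f i x - ⨍ y, f i y ∂μ| ≤ W := fun i =>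
    (hosc i).mono fun x hx => by
      have := (convex_closedBall (f i x) W).average_mem Metric.isClosed_closedBall
        (hx.mono fun y hy => by rwa [Metric.mem_closedBall, Real.dist_eq, abs_sub_comm]) (hf i)
      rwa [Metric.mem_closedBall, Real.dist_eq, abs_sub_comm] at this
  have hsplit : ∫ x, f (σ x) x ∂μ = ∑ i, ∫ x in σ ⁻¹' {i}, f i x ∂μ := by
    simp_rw [select_eq_sum_indicator]
    rw [integral_finsetSum _ fun i _ => (hf i).indicator (hσ i)]
    exact Finset.sum_congr rfl fun i _ => integral_indicator (hσ i)
  have hmix : ∀ i, w i * ∫ x, f i x ∂μ = ∫ _ in σ ⁻¹' {i}, ⨍ y, f i y ∂μ ∂μ := fun i => by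
    rw [setIntegral_const, hfiber, ← measure_smul_average,
      smul_eq_mul, smul_eq_mul, mul_assoc]
  calc |∫ x, f (σ x) x ∂μ - ∑ i, w i * ∫ x, f i x ∂μ|
      = |∑ i, ∫ x in σ ⁻¹' {i}, (f i x - ⨍ y, f i y ∂μ) ∂μ| := by
        rw [hsplit, ← Finset.sum_sub_distrib]
        congr 1
        refine Finset.sum_congr rfl fun i _ => ?_
        rw [hmix, integral_sub (hf i).integrableOn (integrable_const _)]
    _ ≤ ∑ i, W * μ.real (σ ⁻¹' {i}) := by
        refine (Finset.abs_sum_le_sum_abs _ _).trans (Finset.sum_le_sum fun i _ => ?_)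
        rw [← measureReal_restrict_apply_univ]
        exact norm_integral_le_of_norm_le_const (f := fun x => f i x - ⨍ y, f i y ∂μ)
          (ae_restrict_of_ae (hdev i))
    _ = W * μ.real univ := by
        rw [← Finset.mul_sum, sum_measureReal_preimage_singleton _ fun i _ => hσ i,
          Finset.coe_univ, preimage_univ]

end select

lemma floor_mul_eq_of_dvd {m n : ℕ} (hmn : m ∣ n) (hn : 0 < n) {x y : ℝ}
    (h : ⌊x * n⌋ = ⌊y * n⌋) : ⌊x * m⌋ = ⌊y * m⌋ := by
  obtain ⟨d, rfl⟩ := hmn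
  have hd : (d : ℝ) ≠ 0 := by exact_mod_cast (Nat.pos_of_mul_pos_left hn).ne'
  have hcoarse : ∀ z : ℝ, ⌊z * m⌋ = ⌊z * ↑(m * d)⌋ / d := fun z => by
    rw [← Int.floor_div_natCast, Nat.cast_mul, ← mul_assoc, mul_div_cancel_right₀ _ hd]
  rw [hcoarse x, hcoarse y, h]

lemma floor_mul_eq_iff_mem_Ico {n : ℕ} (hn : 0 < n) (j : ℕ) (s : ℝ) :
    ⌊s * n⌋ = j ↔ s ∈ Ico (j / n : ℝ) ((j + 1) / n) := by
  have hn' : (0 : ℝ) < n := by exact_mod_cast hn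
  rw [Int.floor_eq_iff, mem_Ico, div_le_iff₀ hn', lt_div_iff₀ hn', Int.cast_natCast]

section cell

variable [NeZero k] {n : ℕ} {ω : ℝ → Fin k → ℝ}

lemma volume_setOf_chatterIndex_eq_inter_Ico (hn : 0 < n) (hω0 : ∀ s i, 0 ≤ ω s i)
    (hω1 : ∀ s, ∑ i, ω s i = 1) (hωcell : ∀ s s' : ℝ, ⌊s * n⌋ = ⌊s' * n⌋ → ω s = ω s')
    (j : ℕ) (i : Fin k) :
    volume ((fun s => chatterIndex (ω s) (Int.fract (s * n))) ⁻¹' {i} ∩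
      Ico (j / n : ℝ) ((j + 1) / n)) =
      ENNReal.ofReal (ω (j / n) i / n) := by
  have hn' : (0 : ℝ) < n := by exact_mod_cast hn
  have hj : ⌊(j / n : ℝ) * n⌋ = j := by rw [div_mul_cancel₀ _ hn'.ne', Int.floor_natCast]
  have hcell : ∀ s : ℝ, ⌊s * n⌋ = j ↔ s * n + -j ∈ Ico 0 1 := fun s => by
    rw [Int.floor_eq_iff, Int.cast_natCast, mem_Ico]
    constructor <;> rintro ⟨h1, h2⟩ <;> constructor <;> linarith
  have hpre : (fun s => chatterIndex (ω s) (Int.fract (s * n))) ⁻¹' {i} ∩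
      Ico (j / n : ℝ) ((j + 1) / n) =
      (· * (n : ℝ)) ⁻¹' ((· + -(j : ℝ)) ⁻¹' {θ ∈ Ico 0 1 | chatterIndex (ω (j / n)) θ = i}) := by
    ext s
    simp only [mem_inter_iff, mem_ofPred_eq, mem_preimage, mem_singleton_iff,
      ← floor_mul_eq_iff_mem_Ico hn, hcell]
    rw [and_comm]
    refine and_congr_right fun hs => ?_
    rw [hωcell s (j / n) (by rw [hj, (hcell s).2 hs]), Int.fract, (hcell s).2 hs, Int.cast_natCast,
      sub_eq_add_neg]
  rw [hpre, Real.volume_preimage_mul_right hn'.ne', measure_preimage_add_right,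
    volume_setOf_chatterIndex_eq (hω0 _) (hω1 _), ← ENNReal.ofReal_mul (abs_nonneg _),
    abs_of_pos (inv_pos.2 hn'), inv_mul_eq_div]

theorem abs_integral_Ico_chatterIndex_sub_le (hn : 0 < n) (hω : ∀ i, Measurable fun s => ω s i)
    (hω0 : ∀ s i, 0 ≤ ω s i) (hω1 : ∀ s, ∑ i, ω s i = 1)
    (hωcell : ∀ s s' : ℝ, ⌊s * n⌋ = ⌊s' * n⌋ → ω s = ω s') (j : ℕ) {f : Fin k → ℝ → ℝ} {W : ℝ}
    (hf : ∀ i, IntegrableOn (f i) (Ico (j / n : ℝ) ((j + 1) / n)))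
    (hosc : ∀ i, ∀ x ∈ Ico (j / n : ℝ) ((j + 1) / n), ∀ y ∈ Ico (j / n : ℝ) ((j + 1) / n),
      |f i x - f i y| ≤ W) :
    |(∫ s in Ico (j / n : ℝ) ((j + 1) / n), f (chatterIndex (ω s) (Int.fract (s * n))) s) -
        ∑ i, ∫ s in Ico (j / n : ℝ) ((j + 1) / n), f i s * ω s i| ≤ W / n := by
  set C := Ico (j / n : ℝ) ((j + 1) / n)
  have hn' : (0 : ℝ) < n := by exact_mod_cast hn
  have hσ : Measurable fun s => chatterIndex (ω s) (Int.fract (s * n)) :=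
    measurable_chatterIndex hω (by fun_prop) hω0 hω1
      fun s => ⟨Int.fract_nonneg _, Int.fract_lt_one _⟩
  have hC : volume.real C = 1 / n := by
    rw [Real.volume_real_Ico_of_le (by gcongr; linarith)]
    ring
  have hconst : ∀ i, ∫ s in C, f i s * ω s i = ω (j / n) i * ∫ s in C, f i s := fun i => by
    rw [← integral_const_mul]
    refine setIntegral_congr_fun measurableSet_Ico fun s hs => ?_
    have hs' : ⌊s * n⌋ = ⌊(j / n : ℝ) * n⌋ := by
      rw [(floor_mul_eq_iff_mem_Ico hn j s).2 hs, div_mul_cancel₀ _ hn'.ne', Int.floor_natCast]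
    rw [hωcell s _ hs', mul_comm]
  simp only [hconst]
  calc _ ≤ W * (volume.restrict C).real univ :=
        abs_integral_select_sub_sum_le (fun i => hσ (measurableSet_singleton i)) hf
          (fun i => by
            rw [measureReal_restrict_apply (hσ (measurableSet_singleton i)),
              measureReal_restrict_apply_univ, hC, measureReal_def,
              volume_setOf_chatterIndex_eq_inter_Ico hn hω0 hω1 hωcell j i,
              ENNReal.toReal_ofReal (div_nonneg (hω0 _ i) hn'.le)]
            ring)
          fun i => ae_restrict_of_forall_mem measurableSet_Ico fun x hx =>
            ae_restrict_of_forall_mem measurableSet_Ico fun y hy => hosc i x hx y hy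
    _ = W / n := by rw [measureReal_restrict_apply_univ, hC, mul_one_div]

end cell

section unitGrid

variable {n : ℕ}

lemma Icc_div_subset_Icc_zero_one {j : ℕ} (hj : j < n) :
    Icc (j / n : ℝ) ((j + 1) / n) ⊆ Icc 0 1 := by
  have hn' : (0 : ℝ) < n := by exact_mod_cast (Nat.zero_le j).trans_lt hj
  have hj' : (j : ℝ) + 1 ≤ n := by exact_mod_cast hj
  exact Icc_subset_Icc (by positivity) ((div_le_one hn').2 hj')

lemma abs_sub_le_of_mem_Ico_div {j : ℕ} {x y : ℝ} (hx : x ∈ Ico (j / n : ℝ) ((j + 1) / n))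
    (hy : y ∈ Ico (j / n : ℝ) ((j + 1) / n)) : |x - y| ≤ 1 / n := by
  rw [← Real.dist_eq]
  exact (Real.dist_le_of_mem_Icc (Ico_subset_Icc_self hx) (Ico_subset_Icc_self hy)).trans_eq
    (by ring)

lemma integral_Icc_eq_sum_integral_Ico (hn : 0 < n) {F : ℝ → ℝ}
    (hF : IntegrableOn F (Icc 0 1)) :
    ∫ s in Icc (0 : ℝ) 1, F s =
      ∑ j ∈ Finset.range n, ∫ s in Ico (j / n : ℝ) ((j + 1) / n), F s := by
  have hn' : (0 : ℝ) < n := by exact_mod_cast hn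
  have hle : ∀ j : ℕ, (j / n : ℝ) ≤ (j + 1) / n := fun j => by gcongr; linarith
  have hadj := intervalIntegral.sum_integral_adjacent_intervals (a := fun j : ℕ => (j / n : ℝ))
    (f := F) (μ := volume) (n := n) fun j hj => by
      refine (hF.mono_set ?_).intervalIntegrable
      rw [uIcc_of_le (by push_cast; exact hle j)]
      push_cast
      exact Icc_div_subset_Icc_zero_one hj
  simp only [Nat.cast_zero, zero_div, Nat.cast_add, Nat.cast_one, div_self hn'.ne'] at hadj
  rw [integral_Icc_eq_integral_Ioc, ← intervalIntegral.integral_of_le zero_le_one, ← hadj]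
  exact Finset.sum_congr rfl fun j _ => by
    rw [intervalIntegral.integral_of_le (hle j), integral_Ico_eq_integral_Ioc]

lemma abs_integral_Icc_sub_sum_le_of_cells {ι : Type*} [Fintype ι] (hn : 0 < n) {F : ℝ → ℝ}
    {G : ι → ℝ → ℝ} (hF : IntegrableOn F (Icc 0 1)) (hG : ∀ i, IntegrableOn (G i) (Icc 0 1))
    {E : ℝ} (hE : ∀ j < n, |(∫ s in Ico (j / n : ℝ) ((j + 1) / n), F s) -
      ∑ i, ∫ s in Ico (j / n : ℝ) ((j + 1) / n), G i s| ≤ E) :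
    |(∫ s in Icc (0 : ℝ) 1, F s) - ∑ i, ∫ s in Icc (0 : ℝ) 1, G i s| ≤ n * E := by
  simp only [integral_Icc_eq_sum_integral_Ico hn hF, integral_Icc_eq_sum_integral_Ico hn (hG _)]
  rw [Finset.sum_comm (s := Finset.univ), ← Finset.sum_sub_distrib]
  calc _ ≤ ∑ j ∈ Finset.range n, |(∫ s in Ico (j / n : ℝ) ((j + 1) / n), F s) -
          ∑ i, ∫ s in Ico (j / n : ℝ) ((j + 1) / n), G i s| := Finset.abs_sum_le_sum_abs _ _
    _ ≤ ∑ _j ∈ Finset.range n, E := Finset.sum_le_sum fun j hj => hE j (Finset.mem_range.1 hj)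
    _ = n * E := by rw [Finset.sum_const, Finset.card_range, nsmul_eq_mul]

end unitGrid

lemma abs_sub_le_sSup_modulus {A : Type*} [PseudoMetricSpace A] [CompactSpace A]
    {φ : A × ℝ × ℝ → ℝ} (hφ : Continuous φ) {δ : ℝ} (b : A) {s s' t : ℝ} (hs : s ∈ Icc (0 : ℝ) 1)
    (hs' : s' ∈ Icc (0 : ℝ) 1) (ht : t ∈ Icc (0 : ℝ) 1) (hss' : |s - s'| ≤ δ) :
    |φ (b, s, t) - φ (b, s', t)| ≤
      sSup { r : ℝ | ∃ p q : A × ℝ × ℝ,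
        p.2.1 ∈ Set.Icc (0:ℝ) 1 ∧ p.2.2 ∈ Set.Icc (0:ℝ) 1 ∧
        q.2.1 ∈ Set.Icc (0:ℝ) 1 ∧ q.2.2 ∈ Set.Icc (0:ℝ) 1 ∧
        dist p q ≤ δ ∧ r = |φ p - φ q| } := by
  set K : Set (A × ℝ × ℝ) := univ ×ˢ Icc 0 1 ×ˢ Icc 0 1
  have hK : IsCompact K := isCompact_univ.prod (isCompact_Icc.prod isCompact_Icc)
  refine le_csSup (((hK.prod hK).image (by fun_prop : Continuous fun q :
      (A × ℝ × ℝ) × (A × ℝ × ℝ) => |φ q.1 - φ q.2|)).bddAbove.mono ?_)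
    ⟨(b, s, t), (b, s', t), hs, ht, hs', ht, ?_, rfl⟩
  · rintro r ⟨p, q, hp1, hp2, hq1, hq2, -, rfl⟩
    exact ⟨(p, q), ⟨⟨mem_univ _, hp1, hp2⟩, mem_univ _, hq1, hq2⟩, rfl⟩
  · simpa [Prod.dist_eq, Real.dist_eq] using hss'

theorem chattering_approximation_general
    {A : Type*} [MetricSpace A] [CompactSpace A] [MeasurableSpace A]
    (k n m : ℕ) (hk : 0 < k) (hn : 0 < n) (hmn : m ∣ n)
    (a : Fin k → A)
    (Λ : Fin k → ℝ → ℝ → ℝ)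
    (hΛmeas : ∀ i, Measurable fun p : ℝ × ℝ => Λ i p.1 p.2)
    (hΛmem : ∀ i x y, Λ i x y ∈ Set.Icc (0:ℝ) 1)
    (hΛsum : ∀ x y, (∑ i : Fin k, Λ i x y) = 1)
    (hΛstep : ∀ i x y, Λ i x y = Λ i ((⌊x * m⌋ : ℤ) / m) ((⌊y * m⌋ : ℤ) / m)) :
    ∃ α : ℝ × ℝ → A, Measurable α ∧ (∀ p, ∃ i, α p = a i) ∧
      ∀ φ : A × ℝ × ℝ → ℝ, Continuous φ →
        ∀ t ∈ Set.Icc (0:ℝ) 1,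
          |(∫ s in Set.Icc (0:ℝ) 1, φ (α (s, t), s, t)) -
              ∑ i : Fin k, ∫ s in Set.Icc (0:ℝ) 1, φ (a i, s, t) * Λ i s t| ≤
            sSup { r : ℝ | ∃ p q : A × ℝ × ℝ,
              p.2.1 ∈ Set.Icc (0:ℝ) 1 ∧ p.2.2 ∈ Set.Icc (0:ℝ) 1 ∧
              q.2.1 ∈ Set.Icc (0:ℝ) 1 ∧ q.2.2 ∈ Set.Icc (0:ℝ) 1 ∧
              dist p q ≤ 1 / (n : ℝ) ∧ r = |φ p - φ q| } := by
  have : NeZero k := ⟨hk.ne'⟩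
  set ι : ℝ × ℝ → Fin k := fun p => chatterIndex (fun i => Λ i p.1 p.2) (Int.fract (p.1 * n))
  have hι : Measurable ι := measurable_chatterIndex hΛmeas (by fun_prop)
    (fun _ i => (hΛmem i _ _).1) (fun _ => hΛsum _ _)
    fun _ => ⟨Int.fract_nonneg _, Int.fract_lt_one _⟩
  refine ⟨fun p => a (ι p), measurable_from_top.comp hι, fun p => ⟨ι p, rfl⟩, fun φ hφ t ht => ?_⟩
  set W := sSup { r : ℝ | ∃ p q : A × ℝ × ℝ,
    p.2.1 ∈ Set.Icc (0:ℝ) 1 ∧ p.2.2 ∈ Set.Icc (0:ℝ) 1 ∧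
    q.2.1 ∈ Set.Icc (0:ℝ) 1 ∧ q.2.2 ∈ Set.Icc (0:ℝ) 1 ∧
    dist p q ≤ 1 / (n : ℝ) ∧ r = |φ p - φ q| }
  have hφ_cont : ∀ i, Continuous fun s => φ (a i, s, t) := fun i => by fun_prop
  have hι_meas : Measurable fun s => ι (s, t) := hι.comp measurable_prodMk_right
  have hF : IntegrableOn (fun s => φ (a (ι (s, t)), s, t)) (Icc 0 1) :=
    integrable_select (fun i => hι_meas (measurableSet_singleton i))
      fun i => (hφ_cont i).integrableOn_Icc
  have hG : ∀ i, IntegrableOn (fun s => φ (a i, s, t) * Λ i s t) (Icc 0 1) := fun i =>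
    (hφ_cont i).integrableOn_Icc.mul_bdd
      ((hΛmeas i).comp measurable_prodMk_right).aestronglyMeasurable
      (ae_of_all _ fun s => (Real.norm_of_nonneg (hΛmem i s t).1).trans_le (hΛmem i s t).2)
  have hΛcell : ∀ s s' : ℝ, ⌊s * n⌋ = ⌊s' * n⌋ → (fun i => Λ i s t) = fun i => Λ i s' t :=
    fun s s' h => funext fun i => by rw [hΛstep i s, hΛstep i s', floor_mul_eq_of_dvd hmn hn h]
  have hosc : ∀ j < n, ∀ i, ∀ x ∈ Ico (j / n : ℝ) ((j + 1) / n),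
      ∀ y ∈ Ico (j / n : ℝ) ((j + 1) / n), |φ (a i, x, t) - φ (a i, y, t)| ≤ W :=
    fun j hj i x hx y hy => abs_sub_le_sSup_modulus hφ (a i)
      (Icc_div_subset_Icc_zero_one hj (Ico_subset_Icc_self hx))
      (Icc_div_subset_Icc_zero_one hj (Ico_subset_Icc_self hy)) ht (abs_sub_le_of_mem_Ico_div hx hy)
  have hcell : ∀ j < n, |(∫ s in Ico (j / n : ℝ) ((j + 1) / n), φ (a (ι (s, t)), s, t)) -
      ∑ i, ∫ s in Ico (j / n : ℝ) ((j + 1) / n), φ (a i, s, t) * Λ i s t| ≤ W / n :=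
    fun j hj => abs_integral_Ico_chatterIndex_sub_le (ω := fun s i => Λ i s t) hn
      (fun i => (hΛmeas i).comp measurable_prodMk_right) (fun _ i => (hΛmem i _ _).1)
      (fun _ => hΛsum _ _) hΛcell j
      (fun i => (hφ_cont i).integrableOn_Icc.mono_set Ico_subset_Icc_self) (hosc j hj)
  calc _ ≤ n * (W / n) := abs_integral_Icc_sub_sum_le_of_cells hn hF hG hcell
    _ = W := mul_div_cancel₀ _ (Nat.cast_pos.2 hn).ne'

/-- Chattering lemma: given weights `Λ_i : [0,1]² → [0,1]` summing to one, piecewise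
constant on the grid of mesh `1/m` with `m ∣ n`, there is a measurable selector
`α : [0,1]² → A` with values among the `a_i` such that for every continuous `φ` and
every `t ∈ [0,1]`, the chattering error is at most the modulus of continuity `w_φ(1/n)`. -/
theorem chattering_approximation
    {A : Type*} [MetricSpace A] [CompactSpace A] [MeasurableSpace A] [BorelSpace A]
    (k n m : ℕ) (hk : 0 < k) (hm : 0 < m) (hn : 0 < n) (hmn : m ∣ n)
    (a : Fin k → A)
    (Λ : Fin k → ℝ → ℝ → ℝ)
    (hΛmeas : ∀ i, Measurable fun p : ℝ × ℝ => Λ i p.1 p.2)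
    (hΛmem : ∀ i x y, Λ i x y ∈ Set.Icc (0:ℝ) 1)
    (hΛsum : ∀ x y, (∑ i : Fin k, Λ i x y) = 1)
    (hΛstep : ∀ i x y, Λ i x y = Λ i ((⌊x * m⌋ : ℤ) / m) ((⌊y * m⌋ : ℤ) / m)) :
    ∃ α : ℝ × ℝ → A, Measurable α ∧ (∀ p, ∃ i, α p = a i) ∧
      ∀ φ : A × ℝ × ℝ → ℝ, Continuous φ →
        ∀ t ∈ Set.Icc (0:ℝ) 1,
          |(∫ s in Set.Icc (0:ℝ) 1, φ (α (s, t), s, t)) -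
              ∑ i : Fin k, ∫ s in Set.Icc (0:ℝ) 1, φ (a i, s, t) * Λ i s t| ≤
            sSup { r : ℝ | ∃ p q : A × ℝ × ℝ,
              p.2.1 ∈ Set.Icc (0:ℝ) 1 ∧ p.2.2 ∈ Set.Icc (0:ℝ) 1 ∧
              q.2.1 ∈ Set.Icc (0:ℝ) 1 ∧ q.2.2 ∈ Set.Icc (0:ℝ) 1 ∧
              dist p q ≤ 1 / (n : ℝ) ∧ r = |φ p - φ q| } :=
  chattering_approximation_general k n m hk hn hmn a Λ hΛmeas hΛmem hΛsum hΛstep
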